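/- arXiv:1512.02099 — 3 statements merged into one kernel-verified Lean document; each statement's English description precedes it below -/
import Mathlib

section
/- Let S be a symmetric traceless 2×2 real matrix with S ≠ 0, and let v ∈ ℝ². Then ‖v‖⁴/2 − ⟨Sv, v⟩²/‖S‖² = ⟨Sv, Jv⟩²/‖S‖², where ‖S‖² denotes the sum of squares of the entries of S (Frobenius norm squared) and J is rotation by π/2. -/
open Matrix

/-- Rotation by π/2 on ℝ². -/
def Jrot (v : Fin 2 → ℝ) : Fin 2 → ℝ := ![-v 1, v 0]

/-- Squared Frobenius norm of a 2×2 real matrix. -/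
def frobSq (S : Matrix (Fin 2) (Fin 2) ℝ) : ℝ := ∑ i, ∑ j, (S i j) ^ 2

/-- For a nonzero symmetric traceless 2×2 real matrix `S` and `v ∈ ℝ²`,
`‖v‖⁴/2 − ⟨Sv, v⟩²/‖S‖² = ⟨Sv, Jv⟩²/‖S‖²` (Frobenius norm). -/
theorem stmt2 (S : Matrix (Fin 2) (Fin 2) ℝ) (hsym : Sᵀ = S) (htr : S.trace = 0)
    (hS : S ≠ 0) (v : Fin 2 → ℝ) :
    (v ⬝ᵥ v) ^ 2 / 2 - (S.mulVec v ⬝ᵥ v) ^ 2 / frobSq S =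
      (S.mulVec v ⬝ᵥ Jrot v) ^ 2 / frobSq S := by
  have hb : S 1 0 = S 0 1 := by
    have := congrFun (congrFun hsym 0) 1
    simpa [Matrix.transpose_apply] using this
  have ha : S 1 1 = -(S 0 0) := by
    have : S 0 0 + S 1 1 = 0 := by
      simpa [Matrix.trace, Fin.sum_univ_two] using htr
    linarith
  have hne : S 0 0 ≠ 0 ∨ S 0 1 ≠ 0 := by
    by_contra h
    push_neg at h
    apply hS
    ext i j
    fin_cases i <;> fin_cases j <;> simp [h.1, h.2, hb, ha]
  have hfrob : frobSq S = 2 * ((S 0 0) ^ 2 + (S 0 1) ^ 2) := by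
    simp [frobSq, Fin.sum_univ_two, hb, ha]; ring
  have hpos : frobSq S ≠ 0 := by
    rw [hfrob]
    rcases hne with h | h <;> positivity
  rw [eq_div_iff hpos, sub_mul, div_mul_cancel₀ _ hpos]
  simp only [Matrix.mulVec, dotProduct, Fin.sum_univ_two, Jrot, hfrob, hb, ha,
    Matrix.cons_val_zero, Matrix.cons_val_one, Matrix.head_cons]
  ring
end

section
/- Let (M, g) be a two-dimensional Riemannian manifold and S a smooth field of symmetric traceless endomorphisms of TM satisfying the Codazzi equation ∇_X(SY) − ∇_Y(SX) − S[X,Y] = 0. Then at every point where S ≠ 0, |∇S|² = 2|∇|S||². -/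
open Matrix

/-- pointwise Kato-type equality: let `S` be the value at a point of a
symmetric traceless Codazzi tensor on a Riemannian surface and let `T k` be its
covariant derivative in the `k`-th direction of an orthonormal frame, so each `T k`
is symmetric and traceless and the Codazzi equation gives the symmetry
`(T k) i j = (T j) i k`.  If `S ≠ 0` then `|∇S|² = 2·|∇|S||²`, i.e.
`|S|²·|∇S|² = 2·∑ₖ (∑ᵢⱼ Sᵢⱼ (∇S)ᵢⱼₖ)²` (using `|S|·∇ₖ|S| = ∑ᵢⱼ Sᵢⱼ (∇S)ᵢⱼₖ`). -/
theorem stmt8 (S : Matrix (Fin 2) (Fin 2) ℝ) (T : Fin 2 → Matrix (Fin 2) (Fin 2) ℝ)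
    (hsym : Sᵀ = S) (htr : S.trace = 0) (hS : S ≠ 0)
    (hTsym : ∀ k, (T k)ᵀ = T k) (hTtr : ∀ k, (T k).trace = 0)
    (hCodazzi : ∀ i j k, T k i j = T j i k) :
    (∑ i, ∑ j, (S i j) ^ 2) * (∑ k, ∑ i, ∑ j, (T k i j) ^ 2) =
      2 * ∑ k, (∑ i, ∑ j, S i j * T k i j) ^ 2 := by
  have hS10 : S 1 0 = S 0 1 := by
    simpa using (congrFun (congrFun hsym 1) 0).symm
  have hS11 : S 1 1 = -S 0 0 := by
    have := htr
    simp [Matrix.trace, Fin.sum_univ_two] at this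
    linarith
  have hT10 : ∀ k, T k 1 0 = T k 0 1 := fun k => by
    simpa using (congrFun (congrFun (hTsym k) 1) 0).symm
  have hT11 : ∀ k, T k 1 1 = -(T k 0 0) := fun k => by
    have := hTtr k
    simp [Matrix.trace, Fin.sum_univ_two] at this
    linarith
  have hC1 : T 1 0 0 = T 0 0 1 := hCodazzi 0 0 1
  have hC2 : T 1 0 1 = -(T 0 0 0) := by
    have h := hCodazzi 1 0 1
    rw [hT11 0] at h
    rw [← hT10 1, h]
  simp only [Fin.sum_univ_two]
  rw [hS10, hS11, hT10 0, hT11 0, hT10 1, hT11 1, hC1, hC2]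
  ring
end

section
/- Let κ, τ, H ∈ ℝ with H² + τ² ≠ 0 and set α = (κ − 4τ²)/(2√(H² + τ²)). For t ∈ [0,1] define a(t) = 2(κ − 4τ²) + 2(H² + τ²) − 2(κ − 4τ²)t − (α²/2)t² and b(t) = −2|α|t, and G(t) = (b(t) + √(b(t)² + 4a(t)))/2. If b(t)² + 4a(t) > 0 and a(t) > 0 for all t ∈ [0,1], then min_{t∈[0,1]} G(t) = min{G(0), G(1)}, i.e., G attains its minimum on [0,1] at an endpoint. -/
/-- Proposition Zero1: with `α = (κ − 4τ²)/(2√(H² + τ²))`,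
`a(t) = 2(κ − 4τ²) + 2(H² + τ²) − 2(κ − 4τ²)t − (α²/2)t²`, `b(t) = −2|α|t` and
`G(t) = (b(t) + √(b(t)² + 4a(t)))/2`, if `b(t)² + 4a(t) > 0` and `a(t) > 0` on
`[0,1]`, then the minimum of `G` on `[0,1]` is `min {G(0), G(1)}`. -/
theorem stmt11 (κ τ H α : ℝ) (a b G : ℝ → ℝ)
    (hH : H ^ 2 + τ ^ 2 ≠ 0)
    (hα : α = (κ - 4 * τ ^ 2) / (2 * Real.sqrt (H ^ 2 + τ ^ 2)))
    (ha : ∀ t, a t = 2 * (κ - 4 * τ ^ 2) + 2 * (H ^ 2 + τ ^ 2)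
      - 2 * (κ - 4 * τ ^ 2) * t - α ^ 2 / 2 * t ^ 2)
    (hb : ∀ t, b t = -2 * |α| * t)
    (hG : ∀ t, G t = (b t + Real.sqrt (b t ^ 2 + 4 * a t)) / 2)
    (hpos : ∀ t ∈ Set.Icc (0 : ℝ) 1, b t ^ 2 + 4 * a t > 0 ∧ a t > 0) :
    IsLeast (G '' Set.Icc (0 : ℝ) 1) (min (G 0) (G 1)) := by
  obtain ⟨hd0, ha0⟩ := hpos 0 (by norm_num)
  obtain ⟨hd1, ha1⟩ := hpos 1 (by norm_num)
  set m := min (G 0) (G 1) with hm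
  have habs : 0 ≤ |α| := abs_nonneg α
  -- facts about G 0
  have hb0 : b 0 = 0 := by rw [hb]; ring
  have hs0 : (Real.sqrt (b 0 ^ 2 + 4 * a 0)) ^ 2 = b 0 ^ 2 + 4 * a 0 :=
    Real.sq_sqrt hd0.le
  have hG0nn : 0 ≤ G 0 := by
    rw [hG, hb0]
    positivity
  have hG0sq : G 0 ^ 2 = a 0 := by
    rw [hG]
    linear_combination hs0 / 4 + ((b 0 + Real.sqrt (b 0 ^ 2 + 4 * a 0)) / 2) * hb0
  -- facts about G 1
  have hs1 : (Real.sqrt (b 1 ^ 2 + 4 * a 1)) ^ 2 = b 1 ^ 2 + 4 * a 1 :=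
    Real.sq_sqrt hd1.le
  have hs1nn : 0 ≤ Real.sqrt (b 1 ^ 2 + 4 * a 1) := Real.sqrt_nonneg _
  have hb1 : b 1 = -2 * |α| := by rw [hb]; ring
  have hG1pos : 0 < G 1 := by
    have hlt : |b 1| < Real.sqrt (b 1 ^ 2 + 4 * a 1) := by
      nlinarith [abs_nonneg (b 1), sq_abs (b 1)]
    have := neg_abs_le (b 1)
    rw [hG]; linarith
  have hG1key : G 1 ^ 2 + 2 * |α| * G 1 = a 1 := by
    have habs' : |α| = -(b 1) / 2 := by rw [hb1]; ring
    rw [hG, habs']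
    linear_combination hs1 / 4
  have hm0 : m ≤ G 0 := min_le_left _ _
  have hm1 : m ≤ G 1 := min_le_right _ _
  have hmnn : 0 ≤ m := le_min hG0nn hG1pos.le
  have key0 : m ^ 2 ≤ a 0 := by
    nlinarith [mul_nonneg (sub_nonneg.2 hm0) (add_nonneg hG0nn hmnn)]
  have key1 : m ^ 2 + 2 * |α| * m ≤ a 1 := by
    nlinarith [mul_nonneg (sub_nonneg.2 hm1) (add_nonneg hG1pos.le hmnn),
      mul_nonneg habs (sub_nonneg.2 hm1)]
  constructor
  · rcases min_cases (G 0) (G 1) with ⟨h, _⟩ | ⟨h, _⟩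
    · exact ⟨0, by norm_num, h.symm⟩
    · exact ⟨1, by norm_num, h.symm⟩
  · rintro y ⟨t, ht, rfl⟩
    obtain ⟨hdt, hat⟩ := hpos t ht
    obtain ⟨ht0, ht1⟩ := ht
    have hphi : m ^ 2 + 2 * |α| * t * m ≤ a t := by
      have e : a t - m ^ 2 - 2 * |α| * t * m
          = (1 - t) * (a 0 - m ^ 2) + t * (a 1 - (m ^ 2 + 2 * |α| * m))
            + α ^ 2 / 2 * (t * (1 - t)) := by
        rw [ha t, ha 0, ha 1]; ring
      have h1 : 0 ≤ (1 - t) * (a 0 - m ^ 2) :=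
        mul_nonneg (by linarith) (by linarith)
      have h2 : 0 ≤ t * (a 1 - (m ^ 2 + 2 * |α| * m)) :=
        mul_nonneg ht0 (by linarith)
      have h3 : 0 ≤ α ^ 2 / 2 * (t * (1 - t)) :=
        mul_nonneg (by positivity) (mul_nonneg ht0 (by linarith))
      linarith
    have hbt : b t = -2 * |α| * t := hb t
    have hbtnp : b t ≤ 0 := by rw [hbt]; nlinarith
    have hsq : (2 * m - b t) ^ 2 ≤ b t ^ 2 + 4 * a t := by
      have : (2 * m - b t) ^ 2 = b t ^ 2 + 4 * m ^ 2 + 4 * (2 * |α| * t * m) := by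
        rw [hbt]; ring
      linarith [hphi]
    have hle : 2 * m - b t ≤ Real.sqrt (b t ^ 2 + 4 * a t) := by
      have h2 : 0 ≤ 2 * m - b t := by linarith
      calc 2 * m - b t = Real.sqrt ((2 * m - b t) ^ 2) := (Real.sqrt_sq h2).symm
        _ ≤ _ := Real.sqrt_le_sqrt hsq
    rw [hG]; linarith
end
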